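/- Let k be a field of characteristic p > 0 and let L = θⁿ + Σ aᵢθⁱ be a differential operator with aᵢ ∈ k[[t]], acting on k[[t]] via θ = t·d/dt. Suppose F ∈ 1 + t·ℤ_p[[t]] satisfies 𝓛F = 0 for a lift 𝓛 of L over ℤ_p, and f = F/F^σ with F^σ(t) = F(t^p). If the reduction f̄ of f mod p lies in k[[t]], then L(f̄) ≡ 0 in k[[t]]; that is, the reduction of F/F^σ is a solution of L in characteristic p. -/

import Mathlib

/-!
The reduction `S` of `F^σ` only involves powers `t^{pm}`, so `θ S = 0` in characteristic `p`
and `θ` commutes with multiplication by `S`. Hence `L(F̄) = L(f̄ · S) = L(f̄) · S`, which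
vanishes because `L(F̄)` is the reduction of `𝓛 F = 0`; and `S ≠ 0` since `F̄ = f̄ · S` has
constant term `1`, so `L(f̄) = 0` in the domain `k⟦t⟧`.
-/

open PowerSeries

/-- The logarithmic derivative `θ = t·d/dt` on formal power series. -/
noncomputable def theta {R : Type*} [CommRing R] (f : R⟦X⟧) : R⟦X⟧ :=
  PowerSeries.X * PowerSeries.derivative R f

noncomputable def thetaDiffOp {R : Type*} [CommRing R] {n : ℕ} (a : Fin n → R⟦X⟧)
    (g : R⟦X⟧) : R⟦X⟧ :=
  theta^[n] g + ∑ i : Fin n, a i * theta^[(i : ℕ)] g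

section Theta

variable {R S : Type*} [CommRing R] [CommRing S]

lemma coeff_theta (g : R⟦X⟧) (m : ℕ) : coeff m (theta g) = m * coeff m g := by
  cases m with
  | zero => simp [theta]
  | succ m =>
    rw [theta, coeff_succ_X_mul, coeff_derivative]
    push_cast
    ring

lemma theta_mul (g h : R⟦X⟧) : theta (g * h) = theta g * h + g * theta h := by
  simp only [theta, Derivation.leibniz, smul_eq_mul]
  ring

lemma theta_iterate_mul_of_theta_eq_zero {s : R⟦X⟧} (hs : theta s = 0) (g : R⟦X⟧) (j : ℕ) :
    theta^[j] (g * s) = theta^[j] g * s := by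
  induction j with
  | zero => rfl
  | succ j ih =>
    rw [Function.iterate_succ_apply', Function.iterate_succ_apply', ih, theta_mul, hs,
      mul_zero, add_zero]

lemma theta_map (ρ : R →+* S) (g : R⟦X⟧) : theta (map ρ g) = map ρ (theta g) := by
  ext m
  simp [coeff_theta]

lemma theta_iterate_map (ρ : R →+* S) (g : R⟦X⟧) (j : ℕ) :
    theta^[j] (map ρ g) = map ρ (theta^[j] g) := by
  induction j with
  | zero => rfl
  | succ j ih => rw [Function.iterate_succ_apply', Function.iterate_succ_apply', ih, theta_map]

lemma theta_eq_zero_of_coeff_eq_zero_of_not_dvd (p : ℕ) [CharP R p] {g : R⟦X⟧}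
    (hg : ∀ m, ¬ p ∣ m → coeff m g = 0) : theta g = 0 := by
  ext m
  rw [coeff_theta, map_zero]
  by_cases hm : p ∣ m
  · rw [(CharP.cast_eq_zero_iff R p m).mpr hm, zero_mul]
  · rw [hg m hm, mul_zero]

lemma map_thetaDiffOp {n : ℕ} (ρ : R →+* S) (a : Fin n → R⟦X⟧) (g : R⟦X⟧) :
    map ρ (thetaDiffOp a g) = thetaDiffOp (fun i ↦ map ρ (a i)) (map ρ g) := by
  simp only [thetaDiffOp, map_add, map_sum, map_mul, theta_iterate_map]

lemma thetaDiffOp_mul_of_theta_eq_zero {n : ℕ} (a : Fin n → R⟦X⟧) {s : R⟦X⟧}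
    (hs : theta s = 0) (g : R⟦X⟧) : thetaDiffOp a (g * s) = thetaDiffOp a g * s := by
  simp only [thetaDiffOp, theta_iterate_mul_of_theta_eq_zero hs, add_mul, Finset.sum_mul,
    mul_assoc]

end Theta

section FrobeniusLift

variable {R : Type*} [CommRing R] {p : ℕ} (σ : R⟦X⟧ →+* R⟦X⟧)
  (hσX : σ X = X ^ p) (hσC : ∀ c : R, σ (C c) = C c)
include hσX hσC

lemma coeff_frobeniusLift_coe_eq_zero (P : Polynomial R) {m : ℕ} (hm : ¬ p ∣ m) :
    coeff m (σ P) = 0 := by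
  induction P using Polynomial.induction_on' with
  | add P Q hP hQ => rw [Polynomial.coe_add, map_add, map_add, hP, hQ, add_zero]
  | monomial i c =>
    have hmi : m ≠ p * i := fun h ↦ hm ⟨i, h⟩
    rw [← Polynomial.C_mul_X_pow_eq_monomial, Polynomial.coe_mul, Polynomial.coe_C,
      Polynomial.coe_pow, Polynomial.coe_X, map_mul, map_pow, hσX, hσC, ← pow_mul,
      coeff_C_mul, coeff_X_pow, if_neg hmi, mul_zero]

/-- `σ` need not be continuous, so a series is split as its truncation plus a multiple of
`X ^ (m + 1)`, whose image only has coefficients beyond `m`. -/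
lemma coeff_frobeniusLift_eq_zero (hp : 0 < p) (G : R⟦X⟧) {m : ℕ} (hm : ¬ p ∣ m) :
    coeff m (σ G) = 0 := by
  obtain ⟨u, hu⟩ : (X : R⟦X⟧) ^ (m + 1) ∣ G - (trunc (m + 1) G : R⟦X⟧) := by
    refine X_pow_dvd_iff.mpr fun j hj ↦ ?_
    rw [map_sub, Polynomial.coeff_coe, coeff_trunc, if_pos hj, sub_self]
  have hG : G = (trunc (m + 1) G : R⟦X⟧) + X ^ (m + 1) * u := by rw [← hu]; ring
  have htail : coeff m (X ^ (p * (m + 1)) * σ u) = 0 :=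
    X_pow_dvd_iff.mp (dvd_mul_right _ _) m (by nlinarith)
  rw [hG, map_add, map_add, coeff_frobeniusLift_coe_eq_zero σ hσX hσC _ hm, zero_add, map_mul,
    map_pow, hσX, ← pow_mul, htail]

end FrobeniusLift

theorem unit_root_ratio_solves_mod_p_general (p : ℕ) [Fact p.Prime]
    {k : Type*} [Field k] [CharP k p] {n : ℕ}
    (A : Fin n → PowerSeries ℤ_[p]) (a : Fin n → k⟦X⟧)
    (ρ : ℤ_[p] →+* k)
    (ha : ∀ i, PowerSeries.map ρ (A i) = a i)
    (σ : PowerSeries ℤ_[p] →+* PowerSeries ℤ_[p])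
    (hσX : σ PowerSeries.X = PowerSeries.X ^ p)
    (hσC : ∀ c : ℤ_[p], σ (C c) = C c)
    (F f : PowerSeries ℤ_[p]) (hF1 : constantCoeff F = 1)
    (hLF : theta^[n] F + ∑ i : Fin n, A i * theta^[(i : ℕ)] F = 0)
    (hf : f * σ F = F) :
    theta^[n] (PowerSeries.map ρ f)
      + ∑ i : Fin n, a i * theta^[(i : ℕ)] (PowerSeries.map ρ f) = 0 := by
  have hθσF : theta (map ρ (σ F)) = 0 :=
    theta_eq_zero_of_coeff_eq_zero_of_not_dvd p fun m hm ↦ by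
      rw [coeff_map, coeff_frobeniusLift_eq_zero σ hσX hσC (Fact.out : p.Prime).pos F hm,
        map_zero]
  have hσF : map ρ (σ F) ≠ 0 := by
    intro h
    have hconst : constantCoeff (map ρ F) = 1 := by
      rw [← coeff_zero_eq_constantCoeff_apply, coeff_map, coeff_zero_eq_constantCoeff_apply,
        hF1, map_one]
    rw [← hf, map_mul, h, mul_zero, map_zero] at hconst
    exact zero_ne_one hconst
  have hLf : thetaDiffOp a (map ρ f) * map ρ (σ F) = 0 := by
    rw [← thetaDiffOp_mul_of_theta_eq_zero a hθσF, ← map_mul, hf, ← funext ha,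
      ← map_thetaDiffOp, thetaDiffOp, hLF, map_zero]
  exact (mul_eq_zero.mp hLf).resolve_right hσF

/-- If `F ∈ 1 + tℤ_p[[t]]` solves a lift `𝓛` of `L`, then the reduction mod `p` of
`f = F/F^σ` (with `F^σ(t) = F(t^p)`) is a solution of `L` in characteristic `p`. -/
theorem unit_root_ratio_solves_mod_p (p : ℕ) [Fact p.Prime]
    {k : Type*} [Field k] [CharP k p] {n : ℕ} (hn : 1 ≤ n)
    (A : Fin n → PowerSeries ℤ_[p]) (a : Fin n → k⟦X⟧)
    (ρ : ℤ_[p] →+* k)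
    (hρ : ρ = (ZMod.castHom (dvd_refl p) k).comp PadicInt.toZMod)
    (ha : ∀ i, PowerSeries.map ρ (A i) = a i)
    (σ : PowerSeries ℤ_[p] →+* PowerSeries ℤ_[p])
    (hσX : σ PowerSeries.X = PowerSeries.X ^ p)
    (hσC : ∀ c : ℤ_[p], σ (C c) = C c)
    (F f : PowerSeries ℤ_[p]) (hF1 : constantCoeff F = 1)
    (hLF : theta^[n] F + ∑ i : Fin n, A i * theta^[(i : ℕ)] F = 0)
    (hf : f * σ F = F) :
    theta^[n] (PowerSeries.map ρ f)
      + ∑ i : Fin n, a i * theta^[(i : ℕ)] (PowerSeries.map ρ f) = 0 :=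
  unit_root_ratio_solves_mod_p_general p A a ρ ha σ hσX hσC F f hF1 hLF hf
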